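/- arXiv:2512.21154 — 5 statements merged into one kernel-verified Lean document; each statement's English description precedes it below -/
import Mathlib

section
/- Let Λ = ℤ² ⊂ ℝ² and let D be the closed unit disk. The tropical distance function F(p) = inf over nonzero λ ∈ ℤ² of (‖λ‖ + λ·p) vanishes at a point p of the closed disk if and only if ‖p‖ = 1, i.e. p lies on the boundary circle. -/
/-!
For a nonzero lattice vector `λ` and `‖p‖ ≤ 1`, Cauchy–Schwarz gives
`‖λ‖ + ⟪λ, p⟫ ≥ ‖λ‖ (1 - ‖p‖) ≥ 1 - ‖p‖`, so the infimum is at least `1 - ‖p‖`, which is positive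
inside the disk. On the circle, if `⟪λ, p⟫ ≤ 0` then
`‖λ‖ + ⟪λ, p⟫ = (‖λ‖² - ⟪λ, p⟫²) / (‖λ‖ - ⟪λ, p⟫) ≤ ‖λ‖² - ⟪λ, p⟫²`, the squared distance from `λ`
to the line `ℝ p`, and Dirichlet's approximation theorem provides nonzero lattice vectors
arbitrarily close to that line.
-/

open RealInnerProductSpace

section InnerProductSpace

variable {E : Type*} [NormedAddCommGroup E] [InnerProductSpace ℝ E]

theorem one_sub_norm_le_norm_add_inner {l p : E} (hl : 1 ≤ ‖l‖) (hp : ‖p‖ ≤ 1) :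
    1 - ‖p‖ ≤ ‖l‖ + ⟪l, p⟫ := by
  have cauchy_schwarz := neg_le_of_abs_le (abs_real_inner_le_norm l p)
  nlinarith

theorem norm_add_inner_le_norm_sq_sub_inner_sq {l p : E} (hl : 1 ≤ ‖l‖) (hp : ‖p‖ ≤ 1)
    (hlp : ⟪l, p⟫ ≤ 0) : ‖l‖ + ⟪l, p⟫ ≤ ‖l‖ ^ 2 - ⟪l, p⟫ ^ 2 := by
  have hsum : 0 ≤ ‖l‖ + ⟪l, p⟫ := by linarith [one_sub_norm_le_norm_add_inner hl hp]
  calc ‖l‖ + ⟪l, p⟫ ≤ (‖l‖ + ⟪l, p⟫) * (‖l‖ - ⟪l, p⟫) := le_mul_of_one_le_right hsum (by linarith)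
    _ = ‖l‖ ^ 2 - ⟪l, p⟫ ^ 2 := by ring

end InnerProductSpace

theorem EuclideanSpace.norm_sq_mul_norm_sq_eq_inner_sq_add_sq (l p : EuclideanSpace ℝ (Fin 2)) :
    ‖l‖ ^ 2 * ‖p‖ ^ 2 = ⟪l, p⟫ ^ 2 + (l 0 * p 1 - l 1 * p 0) ^ 2 := by
  simp only [EuclideanSpace.real_norm_sq_eq, PiLp.inner_apply, Fin.sum_univ_two,
    RCLike.inner_apply, conj_trivial]
  ring

theorem exists_int_ne_zero_abs_mul_sub_mul_lt (x y : ℝ) {δ : ℝ} (hδ : 0 < δ) :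
    ∃ m n : ℤ, (m, n) ≠ (0, 0) ∧ |m * y - n * x| < δ := by
  rcases eq_or_ne x 0 with rfl | hx
  · exact ⟨0, 1, by simp, by simpa using hδ⟩
  obtain ⟨N, hN⟩ := exists_nat_gt (|x| / δ)
  have hN0 : 0 < N := by exact_mod_cast (div_pos (abs_pos.mpr hx) hδ).trans hN
  obtain ⟨j, k, hk, -, hjk⟩ := Real.exists_int_int_abs_mul_sub_le (y / x) hN0
  refine ⟨k, j, by simp [hk.ne'], ?_⟩
  have hxN : |x| < δ * (N + 1) := by
    rw [div_lt_iff₀ hδ] at hN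
    linarith
  calc |k * y - j * x| = |x| * |k * (y / x) - j| := by
        rw [← abs_mul]; congr 1; field_simp
    _ ≤ |x| * (1 / (N + 1)) := by gcongr
    _ < δ := by rw [mul_one_div, div_lt_iff₀ (by positivity)]; exact hxN

noncomputable def latticePoint (m n : ℤ) : EuclideanSpace ℝ (Fin 2) := !₂[(m : ℝ), n]

theorem norm_latticePoint (m n : ℤ) : ‖latticePoint m n‖ = √((m : ℝ) ^ 2 + (n : ℝ) ^ 2) := by
  simp [latticePoint, EuclideanSpace.norm_eq, Fin.sum_univ_two]

theorem inner_latticePoint (m n : ℤ) (p : EuclideanSpace ℝ (Fin 2)) :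
    ⟪latticePoint m n, p⟫ = m * p 0 + n * p 1 := by
  simp [latticePoint, PiLp.inner_apply, Fin.sum_univ_two, mul_comm]

theorem latticePoint_neg (m n : ℤ) : latticePoint (-m) (-n) = -latticePoint m n := by
  ext i; fin_cases i <;> simp [latticePoint]

theorem one_le_norm_latticePoint {m n : ℤ} (h : (m, n) ≠ (0, 0)) : 1 ≤ ‖latticePoint m n‖ := by
  rw [norm_latticePoint, Real.one_le_sqrt]
  have : (1 : ℤ) ≤ m ^ 2 + n ^ 2 := by
    rcases ne_or_eq m 0 with hm | rfl
    · nlinarith [sq_nonneg n, Int.one_le_abs hm, sq_abs m]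
    · have hn : n ≠ 0 := by simpa using h
      nlinarith [Int.one_le_abs hn, sq_abs n]
  exact_mod_cast this

theorem exists_latticePoint_norm_add_inner_lt {p : EuclideanSpace ℝ (Fin 2)} (hp : ‖p‖ = 1)
    {ε : ℝ} (hε : 0 < ε) :
    ∃ m n : ℤ, (m, n) ≠ (0, 0) ∧ ‖latticePoint m n‖ + ⟪latticePoint m n, p⟫ < ε := by
  obtain ⟨m, n, hmn, hclose⟩ :=
    exists_int_ne_zero_abs_mul_sub_mul_lt (p 0) (p 1) (Real.sqrt_pos.mpr hε)
  set l := latticePoint m n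
  have hdist : ‖l‖ ^ 2 - ⟪l, p⟫ ^ 2 < ε := by
    have hcross : l 0 * p 1 - l 1 * p 0 = m * p 1 - n * p 0 := by simp [l, latticePoint]
    calc ‖l‖ ^ 2 - ⟪l, p⟫ ^ 2 = (m * p 1 - n * p 0) ^ 2 := by
          have lagrange := EuclideanSpace.norm_sq_mul_norm_sq_eq_inner_sq_add_sq l p
          rw [hp, one_pow, mul_one, hcross] at lagrange
          linarith
      _ = |m * p 1 - n * p 0| ^ 2 := (sq_abs _).symm
      _ < ε := (Real.lt_sqrt (abs_nonneg _)).mp hclose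
  have hl := one_le_norm_latticePoint hmn
  rcases le_total ⟪l, p⟫ 0 with hlp | hlp
  · exact ⟨m, n, hmn, (norm_add_inner_le_norm_sq_sub_inner_sq hl hp.le hlp).trans_lt hdist⟩
  · refine ⟨-m, -n, by simpa using hmn, ?_⟩
    have key := norm_add_inner_le_norm_sq_sub_inner_sq (l := -l) (by rwa [norm_neg]) hp.le
      (by rw [inner_neg_left]; linarith)
    rw [norm_neg, inner_neg_left, neg_sq] at key
    simpa only [latticePoint_neg, norm_neg, inner_neg_left] using key.trans_lt hdist

/-- For the closed unit disk `D` in the Euclidean plane and the standard lattice `ℤ²`,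
the tropical distance function `F(p) = inf_{λ∈ℤ²∖{0}} (‖λ‖ + λ·p)` vanishes at a
point `p` of the disk if and only if `p` lies on the boundary circle `‖p‖ = 1`. -/
theorem disk_tropical_distance_zero_iff_boundary
    (p : EuclideanSpace ℝ (Fin 2)) (hp : ‖p‖ ≤ 1) :
    sInf {v : ℝ | ∃ m n : ℤ, (m, n) ≠ (0, 0) ∧
        v = Real.sqrt ((m : ℝ) ^ 2 + (n : ℝ) ^ 2) + ((m : ℝ) * p 0 + (n : ℝ) * p 1)}
      = 0 ↔ ‖p‖ = 1 := by
  simp_rw [← norm_latticePoint, ← inner_latticePoint]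
  set S := {v : ℝ | ∃ m n : ℤ, (m, n) ≠ (0, 0) ∧
    v = ‖latticePoint m n‖ + ⟪latticePoint m n, p⟫}
  have hne : S.Nonempty := ⟨_, 1, 0, by simp, rfl⟩
  have hlow : ∀ v ∈ S, 1 - ‖p‖ ≤ v := by
    rintro v ⟨m, n, hmn, rfl⟩
    exact one_sub_norm_le_norm_add_inner (one_le_norm_latticePoint hmn) hp
  constructor
  · intro h
    linarith [h ▸ le_csInf hne hlow]
  · intro h
    refine csInf_eq_of_forall_ge_of_forall_gt_exists_lt hne
      (fun v hv ↦ by linarith [hlow v hv]) fun ε hε ↦ ?_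
    obtain ⟨m, n, hmn, hlt⟩ := exists_latticePoint_norm_add_inner_lt h hε
    exact ⟨_, ⟨m, n, hmn, rfl⟩, hlt⟩
end

section
/- Let Q(x,y) = ax² + bxy + cy² with a, c > 0 and 4ac − b² = 4, and suppose the point z = −b/(2a) + i/a of the upper half plane satisfies |Re z| < 1/2 and |z| > 1. Then among all nonzero λ ∈ ℤ², the minimum of √(Q*(λ)) (where Q*(m,n) = c m² − b m n + a n²) is attained at λ = (±1, 0) and equals √a, i.e. the tropical distance function of the ellipse Q ≤ 1 at the origin equals √a. -/
/-!
The conditions `|Re z| < 1/2` and `|z| > 1` say exactly that `Q` is a reduced form, `|b| < a < c`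
(note `|z|² = (b² + 4) / (4a²) = c / a` by the discriminant condition). For a reduced form,
`c m² − b m n + a n² ≥ a (m² − |m n| + n²) ≥ a` on nonzero integer vectors, with equality at `(0, 1)`.
-/

theorem Int.one_le_sq_sub_abs_mul_add_sq {m n : ℤ} (h : (m, n) ≠ (0, 0)) :
    1 ≤ m ^ 2 - |m * n| + n ^ 2 := by
  have hsq : m ^ 2 - |m * n| + n ^ 2 = (|m| - |n|) ^ 2 + |m| * |n| := by
    rw [abs_mul, ← sq_abs m, ← sq_abs n]; ring
  rw [hsq]
  rcases eq_or_ne m 0 with rfl | hm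
  · have hn : n ≠ 0 := fun hn => h (by rw [hn])
    simp only [abs_zero, zero_sub, zero_mul, add_zero, even_two, Even.neg_pow]
    nlinarith [Int.one_le_abs hn]
  rcases eq_or_ne n 0 with rfl | hn
  · simp only [abs_zero, sub_zero, mul_zero, add_zero]
    nlinarith [Int.one_le_abs hm]
  · nlinarith [Int.one_le_abs hm, Int.one_le_abs hn, sq_nonneg (|m| - |n|)]

theorem le_dual_form_of_reduced {a b c : ℝ} (hb : |b| ≤ a) (hac : a ≤ c) {m n : ℤ}
    (h : (m, n) ≠ (0, 0)) : a ≤ c * (m : ℝ) ^ 2 - b * (m : ℝ) * (n : ℝ) + a * (n : ℝ) ^ 2 := by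
  have ha : 0 ≤ a := (abs_nonneg b).trans hb
  have hlattice : (1 : ℝ) ≤ (m : ℝ) ^ 2 - |(m : ℝ) * n| + (n : ℝ) ^ 2 := by
    exact_mod_cast Int.one_le_sq_sub_abs_mul_add_sq h
  have hcross : b * (m * n) ≤ a * |(m : ℝ) * n| :=
    (le_abs_self _).trans (by rw [abs_mul]; exact mul_le_mul_of_nonneg_right hb (abs_nonneg _))
  calc a ≤ a * ((m : ℝ) ^ 2 - |(m : ℝ) * n| + (n : ℝ) ^ 2) := le_mul_of_one_le_right ha hlattice
    _ ≤ c * (m : ℝ) ^ 2 - b * (m : ℝ) * (n : ℝ) + a * (n : ℝ) ^ 2 := by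
      nlinarith [mul_le_mul_of_nonneg_right hac (sq_nonneg (m : ℝ))]

theorem isLeast_sqrt_dual_form_of_reduced {a b c : ℝ} (hb : |b| ≤ a) (hac : a ≤ c) :
    IsLeast {v : ℝ | ∃ m n : ℤ, (m, n) ≠ (0, 0) ∧
        v = Real.sqrt (c * (m : ℝ) ^ 2 - b * (m : ℝ) * (n : ℝ) + a * (n : ℝ) ^ 2)}
      (Real.sqrt a) := by
  refine ⟨⟨0, 1, by simp, by simp⟩, ?_⟩
  rintro v ⟨m, n, h, rfl⟩
  exact Real.sqrt_le_sqrt (le_dual_form_of_reduced hb hac h)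

theorem abs_lt_of_abs_neg_div_two_mul_lt_half {a b : ℝ} (ha : 0 < a)
    (h : |(-b / (2 * a))| < 1 / 2) : |b| < a := by
  rw [abs_div, abs_neg, abs_of_pos (by linarith : (0 : ℝ) < 2 * a),
    div_lt_div_iff₀ (by linarith) (by norm_num)] at h
  linarith

theorem normSq_root_eq_div {a b c : ℝ} (ha : a ≠ 0) (hdisc : 4 * a * c - b ^ 2 = 4) :
    (-b / (2 * a)) ^ 2 + (1 / a) ^ 2 = c / a := by
  field_simp
  linear_combination -hdisc

theorem ellipse_center_tropical_distance_general (a b c : ℝ) (ha : 0 < a)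
    (hdisc : 4 * a * c - b ^ 2 = 4)
    (hRe : |(-b / (2 * a))| < 1 / 2)
    (habs : (-b / (2 * a)) ^ 2 + (1 / a) ^ 2 > 1) :
    IsLeast {v : ℝ | ∃ m n : ℤ, (m, n) ≠ (0, 0) ∧
        v = Real.sqrt (c * (m : ℝ) ^ 2 - b * (m : ℝ) * (n : ℝ) + a * (n : ℝ) ^ 2)}
      (Real.sqrt a) := by
  have hb : |b| < a := abs_lt_of_abs_neg_div_two_mul_lt_half ha hRe
  have hac : a < c := by
    rw [normSq_root_eq_div ha.ne' hdisc, gt_iff_lt, one_lt_div ha] at habs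
    exact habs
  exact isLeast_sqrt_dual_form_of_reduced hb.le hac.le

/-- Let `Q(x,y) = ax² + bxy + cy²` with `a, c > 0`, `4ac − b² = 4`, and suppose
the point `z = −b/(2a) + i/a` lies in the interior of the standard fundamental
domain: `|Re z| < 1/2` and `|z| > 1`. Then the minimum over nonzero `λ ∈ ℤ²` of
`√(Q*(λ))`, where `Q*(m,n) = c m² − b m n + a n²`, is attained (e.g. at
`λ = (±1,0)`) and equals `√a`; i.e. the tropical distance function of the
ellipse `Q ≤ 1` at the origin equals `√a`. -/
theorem ellipse_center_tropical_distance (a b c : ℝ) (ha : 0 < a) (hc : 0 < c)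
    (hdisc : 4 * a * c - b ^ 2 = 4)
    (hRe : |(-b / (2 * a))| < 1 / 2)
    (habs : (-b / (2 * a)) ^ 2 + (1 / a) ^ 2 > 1) :
    IsLeast {v : ℝ | ∃ m n : ℤ, (m, n) ≠ (0, 0) ∧
        v = Real.sqrt (c * (m : ℝ) ^ 2 - b * (m : ℝ) * (n : ℝ) + a * (n : ℝ) ^ 2)}
      (Real.sqrt a) :=
  ellipse_center_tropical_distance_general a b c ha hdisc hRe habs
end

section
/- Let α > 0 be irrational and consider the curve P(t) = e^t·(1, α) + e^{−t}·(β, γ) in ℝ² for fixed β, γ > 0. Then there exists a constant M (depending only on α, β, γ) such that for all t ≥ 0 there exist integers p, q, not both zero, with q ≥ 0, p ≥ 0 and |p·x(t) − q·y(t)| ≤ M, where (x(t), y(t)) = P(t); in fact one may take p/q a continued fraction convergent of α. -/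
open Real

/-!
Write `s = e^t`. By Dirichlet's theorem there are `p, q ∈ ℕ` with `0 < q ≤ 2s` and
`|qα - p| ≤ 1/s`; then `p ≤ (2α + 1)s` as well. Along the curve the linear form splits as
`p·x - q·y = s(p - qα) + s⁻¹(pβ - qγ)`: the first term is at most `1` because `p/q`
approximates `α`, the second is bounded because `p` and `q` grow at most linearly in `s`.
-/

lemma exists_nat_abs_mul_sub_le_of_nonneg {ξ : ℝ} (hξ : 0 ≤ ξ) {n : ℕ} (hn : 0 < n) :
    ∃ p q : ℕ, 0 < q ∧ q ≤ n ∧ |q * ξ - p| ≤ 1 / (n + 1) := by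
  obtain ⟨q, hq, hqn, happrox⟩ := Real.exists_nat_abs_mul_sub_round_le ξ hn
  have hround : 0 ≤ round (q * ξ) := by
    rw [round_eq]
    exact Int.floor_nonneg.mpr (by positivity)
  have hcast : (((round (q * ξ)).toNat : ℕ) : ℝ) = round (q * ξ) := by
    exact_mod_cast Int.toNat_of_nonneg hround
  exact ⟨(round (q * ξ)).toNat, q, hq, hqn, hcast ▸ happrox⟩

lemma exists_nat_mul_abs_mul_sub_le_one {ξ s : ℝ} (hξ : 0 ≤ ξ) (hs : 1 ≤ s) :
    ∃ p q : ℕ, 0 < q ∧ (q : ℝ) ≤ 2 * s ∧ s * |q * ξ - p| ≤ 1 := by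
  set n := ⌈s⌉₊
  have hn : 0 < n := Nat.ceil_pos.mpr (by linarith)
  have hsn : s ≤ n := Nat.le_ceil s
  have hns : (n : ℝ) < s + 1 := Nat.ceil_lt_add_one (by linarith)
  obtain ⟨p, q, hq, hqn, happrox⟩ := exists_nat_abs_mul_sub_le_of_nonneg hξ hn
  refine ⟨p, q, hq, by linarith [(Nat.cast_le (α := ℝ)).mpr hqn], ?_⟩
  calc s * |q * ξ - p| ≤ s * (1 / (n + 1)) := by gcongr
    _ ≤ 1 := by rw [mul_one_div, div_le_one (by positivity)]; linarith

lemma abs_linear_form_le {ξ β γ s p q : ℝ} (hs : 1 ≤ s) (hqs : |q| ≤ 2 * s)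
    (happrox : s * |q * ξ - p| ≤ 1) :
    |p * (s * 1 + s⁻¹ * β) - q * (s * ξ + s⁻¹ * γ)| ≤ 1 + ((2 * |ξ| + 1) * |β| + 2 * |γ|) := by
  have hs0 : 0 < s := by linarith
  have hp : |p| ≤ (2 * |ξ| + 1) * s := by
    have happrox' : |q * ξ - p| ≤ s := by nlinarith [abs_nonneg (q * ξ - p)]
    calc |p| ≤ |q * ξ| + |q * ξ - p| := by
          simpa using abs_sub (q * ξ) (q * ξ - p)
      _ ≤ 2 * s * |ξ| + s := by rw [abs_mul]; gcongr
      _ = (2 * |ξ| + 1) * s := by ring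
  have hsplit : p * (s * 1 + s⁻¹ * β) - q * (s * ξ + s⁻¹ * γ)
      = s * (p - q * ξ) + s⁻¹ * (p * β - q * γ) := by ring
  have hfirst : |s * (p - q * ξ)| ≤ 1 := by
    rwa [abs_mul, abs_of_pos hs0, abs_sub_comm]
  have hsecond : |s⁻¹ * (p * β - q * γ)| ≤ (2 * |ξ| + 1) * |β| + 2 * |γ| :=
    calc |s⁻¹ * (p * β - q * γ)| ≤ s⁻¹ * (|p| * |β| + |q| * |γ|) := by
          rw [abs_mul, abs_inv, abs_of_pos hs0, ← abs_mul, ← abs_mul]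
          gcongr
          exact abs_sub _ _
      _ ≤ s⁻¹ * ((2 * |ξ| + 1) * s * |β| + 2 * s * |γ|) := by gcongr
      _ = (2 * |ξ| + 1) * |β| + 2 * |γ| := by field_simp
  rw [hsplit]
  exact (abs_add_le _ _).trans (add_le_add hfirst hsecond)

theorem cone_tropical_distance_bounded_general (α β γ : ℝ) (hα0 : 0 < α) :
    ∃ M : ℝ, ∀ t : ℝ, 0 ≤ t → ∃ p q : ℕ, (p, q) ≠ (0, 0) ∧
      |(p : ℝ) * (exp t * 1 + exp (-t) * β) - (q : ℝ) * (exp t * α + exp (-t) * γ)|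
        ≤ M := by
  refine ⟨1 + ((2 * |α| + 1) * |β| + 2 * |γ|), fun t ht => ?_⟩
  obtain ⟨p, q, hq, hqs, happrox⟩ := exists_nat_mul_abs_mul_sub_le_one hα0.le (one_le_exp ht)
  refine ⟨p, q, by simp [hq.ne'], ?_⟩
  rw [exp_neg]
  exact abs_linear_form_le (one_le_exp ht) (by rwa [Nat.abs_cast]) happrox

/-- Along the curve `P(t) = e^t·(1, α) + e^{−t}·(β, γ)` with `α > 0` irrational
and `β, γ > 0`, there is a constant `M` such that for every `t ≥ 0` some
nonzero integer linear form `p·x − q·y` with `p, q ≥ 0` is bounded by `M`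
at `P(t)`. -/
theorem cone_tropical_distance_bounded (α β γ : ℝ)
    (hα : Irrational α) (hα0 : 0 < α) (hβ : 0 < β) (hγ : 0 < γ) :
    ∃ M : ℝ, ∀ t : ℝ, 0 ≤ t → ∃ p q : ℕ, (p, q) ≠ (0, 0) ∧
      |(p : ℝ) * (exp t * 1 + exp (-t) * β) - (q : ℝ) * (exp t * α + exp (-t) * γ)|
        ≤ M :=
  cone_tropical_distance_bounded_general α β γ hα0
end

section
/- Let Ω ⊂ ℝ² be a convex set containing no affine line, and let Λ ⊂ ℝ² be any lattice (discrete cocompact subgroup). Then there exists a nonzero λ ∈ Λ such that c_λ := sup_{p∈Ω} (−λ·p) is finite. -/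
/-!
The vectors `w` with `sup_{p ∈ Ω} w·p < ∞` form a convex cone, the barrier cone of `Ω`. If its
interior were empty it would be orthogonal to some `d ≠ 0`. Separating points from `closure Ω` by
half-planes then shows that `closure Ω` is invariant under translation by `ℝ d`, and an open
segment argument puts the line through an interior point of `Ω` in direction `d` inside `Ω`;
when `Ω` has empty interior it lies on a line in direction `d` on which it is unbounded both ways.
So the barrier cone has an interior point; being a cone, it then contains a nonzero vector with
rational, hence after scaling integer, coordinates in the basis `u, v`.
-/

open Set

lemma LinearMap.apply_eq_fst_add_snd (f : ℝ × ℝ →ₗ[ℝ] ℝ) (p : ℝ × ℝ) :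
    f p = f (1, 0) * p.1 + f (0, 1) * p.2 := by
  have hp : p = p.1 • ((1 : ℝ), (0 : ℝ)) + p.2 • ((0 : ℝ), (1 : ℝ)) := by ext <;> simp
  rw [hp, map_add, map_smul, map_smul, smul_eq_mul, smul_eq_mul]
  simp [mul_comm]

theorem Convex.exists_linearMap_ne_zero_of_interior_eq_empty {V : Type*}
    [NormedAddCommGroup V] [NormedSpace ℝ V] [FiniteDimensional ℝ V] {s : Set V}
    (hs : Convex ℝ s) (hne : s.Nonempty) (h : interior s = ∅) :
    ∃ f : V →ₗ[ℝ] ℝ, f ≠ 0 ∧ ∀ x ∈ s, ∀ y ∈ s, f x = f y := by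
  have hspan : vectorSpan ℝ s < ⊤ := by
    rw [lt_top_iff_ne_top, ne_eq,
      ← AffineSubspace.affineSpan_eq_top_iff_vectorSpan_eq_top_of_nonempty ℝ V V hne,
      ← hs.interior_nonempty_iff_affineSpan_eq_top, h]
    exact not_nonempty_empty
  obtain ⟨f, hf0, hker⟩ := (vectorSpan ℝ s).exists_le_ker_of_lt_top hspan
  refine ⟨f, hf0, fun x hx y hy => ?_⟩
  rw [← sub_eq_zero, ← map_sub]
  exact hker (vsub_mem_vectorSpan ℝ hx hy)

theorem Convex.add_smul_mem_of_unbounded {E : Type*} [AddCommGroup E] [Module ℝ E]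
    {S : Set E} (hS : Convex ℝ S) {x d : E}
    (hup : ∀ t : ℝ, ∃ s, t ≤ s ∧ x + s • d ∈ S) (hdown : ∀ t : ℝ, ∃ s, s ≤ t ∧ x + s • d ∈ S)
    (t : ℝ) : x + t • d ∈ S := by
  obtain ⟨s₁, hs₁, hmem₁⟩ := hdown t
  obtain ⟨s₂, hs₂, hmem₂⟩ := hup t
  have hI : Convex ℝ ((fun s : ℝ => x + s • d) ⁻¹' S) :=
    hS.affine_preimage ((AffineMap.const ℝ ℝ x) + (LinearMap.smulRight LinearMap.id d).toAffineMap)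
  exact hI.ordConnected.out hmem₁ hmem₂ ⟨hs₁, hs₂⟩

theorem Convex.add_smul_mem_interior_of_forall_mem_closure {E : Type*} [AddCommGroup E]
    [Module ℝ E] [TopologicalSpace E] [IsTopologicalAddGroup E] [ContinuousSMul ℝ E]
    {S : Set E} (hS : Convex ℝ S) {z d : E} (hz : z ∈ interior S)
    (hline : ∀ t : ℝ, z + t • d ∈ closure S) (t : ℝ) : z + t • d ∈ interior S := by
  refine hS.openSegment_interior_closure_subset_interior hz (hline (2 * t))
    ⟨1 / 2, 1 / 2, by norm_num, by norm_num, by norm_num, ?_⟩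
  module

/-- Rockafellar's barrier cone; the coefficient `c_λ` of the theorem is finite exactly when
`-λ ∈ barrierCone Ω`. -/
def barrierCone (S : Set (ℝ × ℝ)) : Set (ℝ × ℝ) :=
  {w | BddAbove ((fun p : ℝ × ℝ => w.1 * p.1 + w.2 * p.2) '' S)}

section barrierCone

variable {S : Set (ℝ × ℝ)}

theorem smul_add_smul_mem_barrierCone {a b : ℝ} (ha : 0 ≤ a) (hb : 0 ≤ b) {w w' : ℝ × ℝ}
    (hw : w ∈ barrierCone S) (hw' : w' ∈ barrierCone S) : a • w + b • w' ∈ barrierCone S := by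
  obtain ⟨M, hM⟩ := hw
  obtain ⟨M', hM'⟩ := hw'
  refine ⟨a * M + b * M', ?_⟩
  rintro _ ⟨p, hp, rfl⟩
  have h : w.1 * p.1 + w.2 * p.2 ≤ M := hM ⟨p, hp, rfl⟩
  have h' : w'.1 * p.1 + w'.2 * p.2 ≤ M' := hM' ⟨p, hp, rfl⟩
  calc (a • w + b • w').1 * p.1 + (a • w + b • w').2 * p.2
      = a * (w.1 * p.1 + w.2 * p.2) + b * (w'.1 * p.1 + w'.2 * p.2) := by
        simp only [Prod.fst_add, Prod.snd_add, Prod.smul_fst, Prod.smul_snd, smul_eq_mul]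
        ring
    _ ≤ a * M + b * M' := by gcongr

theorem convex_barrierCone (S : Set (ℝ × ℝ)) : Convex ℝ (barrierCone S) :=
  fun _ hw _ hw' _ _ ha hb _ => smul_add_smul_mem_barrierCone ha hb hw hw'

theorem smul_mem_barrierCone {r : ℝ} (hr : 0 ≤ r) {w : ℝ × ℝ} (hw : w ∈ barrierCone S) :
    r • w ∈ barrierCone S := by
  simpa using smul_add_smul_mem_barrierCone hr le_rfl hw hw

theorem zero_mem_barrierCone (S : Set (ℝ × ℝ)) : (0 : ℝ × ℝ) ∈ barrierCone S :=
  ⟨0, by rintro _ ⟨p, -, rfl⟩; simp⟩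

@[simp]
theorem barrierCone_empty : barrierCone ∅ = univ := by
  simp [barrierCone]

theorem apply_prod_mem_barrierCone {f : ℝ × ℝ →ₗ[ℝ] ℝ} {M : ℝ} (hf : ∀ p ∈ S, f p ≤ M) :
    (f (1, 0), f (0, 1)) ∈ barrierCone S := by
  refine ⟨M, ?_⟩
  rintro _ ⟨p, hp, rfl⟩
  simpa [← LinearMap.apply_eq_fst_add_snd] using hf p hp

theorem add_smul_mem_closure_of_forall_mem_barrierCone (hS : Convex ℝ S) {d : ℝ × ℝ}
    (hd : ∀ w ∈ barrierCone S, w.1 * d.1 + w.2 * d.2 = 0) {x : ℝ × ℝ} (hx : x ∈ closure S)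
    (t : ℝ) : x + t • d ∈ closure S := by
  by_contra hxt
  obtain ⟨f, u, hfS, hfx⟩ := geometric_hahn_banach_closed_point hS.closure isClosed_closure hxt
  have hfd : f d = 0 := by
    have hw := apply_prod_mem_barrierCone (f := f.toLinearMap) (M := u)
      fun p hp => (hfS p (subset_closure hp)).le
    rw [← ContinuousLinearMap.coe_coe, LinearMap.apply_eq_fst_add_snd]
    exact hd _ hw
  have := hfS x hx
  simp only [map_add, map_smul, hfd, smul_zero, add_zero] at hfx
  linarith

end barrierCone

theorem LinearMap.apply_prod_ne_zero {f : ℝ × ℝ →ₗ[ℝ] ℝ} (hf : f ≠ 0) :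
    (f (1, 0), f (0, 1)) ≠ 0 := by
  contrapose! hf
  refine LinearMap.ext fun p => ?_
  rw [LinearMap.apply_eq_fst_add_snd, (Prod.mk_eq_zero.1 hf).1, (Prod.mk_eq_zero.1 hf).2]
  simp

theorem cross_eq_zero_of_dot_eq_zero {n d q : ℝ × ℝ} (hn : n ≠ 0)
    (hd : n.1 * d.1 + n.2 * d.2 = 0) (hq : n.1 * q.1 + n.2 * q.2 = 0) :
    d.1 * q.2 - d.2 * q.1 = 0 := by
  have h₁ : n.1 * (d.1 * q.2 - d.2 * q.1) = 0 := by linear_combination q.2 * hd - d.2 * hq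
  have h₂ : n.2 * (d.1 * q.2 - d.2 * q.1) = 0 := by linear_combination d.1 * hq - q.1 * hd
  by_contra h
  exact hn (Prod.ext ((mul_eq_zero.1 h₁).resolve_right h) ((mul_eq_zero.1 h₂).resolve_right h))

theorem exists_forall_add_smul_mem_of_interior_eq_empty {S : Set (ℝ × ℝ)} (hS : Convex ℝ S)
    (hne : S.Nonempty) (hint : interior S = ∅) {d : ℝ × ℝ} (hd0 : d ≠ 0)
    (hd : ∀ w ∈ barrierCone S, w.1 * d.1 + w.2 * d.2 = 0) :
    ∃ x : ℝ × ℝ, ∀ t : ℝ, x + t • d ∈ S := by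
  obtain ⟨x, hx⟩ := hne
  obtain ⟨ψ, hψ0, hψ⟩ := hS.exists_linearMap_ne_zero_of_interior_eq_empty ⟨x, hx⟩ hint
  have hψd := hd _ (apply_prod_mem_barrierCone fun p hp => (hψ p hp x hx).le)
  have hdd : 0 < d.1 ^ 2 + d.2 ^ 2 := by
    have : d.1 ≠ 0 ∨ d.2 ≠ 0 := by
      by_contra! h
      exact hd0 (Prod.ext h.1 h.2)
    rcases this with h | h <;> positivity
  set σ : ℝ × ℝ → ℝ := fun p => (d.1 * (p.1 - x.1) + d.2 * (p.2 - x.2)) / (d.1 ^ 2 + d.2 ^ 2)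
  have hσ : ∀ p ∈ S, x + σ p • d = p := by
    intro p hp
    have hpx : ψ (1, 0) * (p - x).1 + ψ (0, 1) * (p - x).2 = 0 := by
      rw [← LinearMap.apply_eq_fst_add_snd, map_sub, hψ p hp x hx, sub_self]
    have hcross := cross_eq_zero_of_dot_eq_zero (LinearMap.apply_prod_ne_zero hψ0) hψd hpx
    simp only [Prod.fst_sub, Prod.snd_sub] at hcross
    ext <;> simp only [σ, Prod.fst_add, Prod.snd_add, Prod.smul_fst, Prod.smul_snd, smul_eq_mul] <;>
      field_simp
    · linear_combination d.2 * hcross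
    · linear_combination -d.1 * hcross
  have hunbdd : ∀ e ∉ barrierCone S, ∀ M, ∃ p ∈ S, M < e.1 * p.1 + e.2 * p.2 := by
    intro e he M
    obtain ⟨_, ⟨p, hp, rfl⟩, hlt⟩ := not_bddAbove_iff.1 he M
    exact ⟨p, hp, hlt⟩
  have hd_notMem : d ∉ barrierCone S := fun h => by nlinarith [hd d h]
  have hnegd_notMem : -d ∉ barrierCone S := fun h => by
    have := hd (-d) h
    simp only [Prod.fst_neg, Prod.snd_neg] at this
    nlinarith
  refine ⟨x, hS.add_smul_mem_of_unbounded (fun t => ?_) (fun t => ?_)⟩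
  · obtain ⟨p, hp, hlt⟩ := hunbdd d hd_notMem (d.1 * x.1 + d.2 * x.2 + t * (d.1 ^ 2 + d.2 ^ 2))
    refine ⟨σ p, ?_, (hσ p hp).symm ▸ hp⟩
    rw [le_div_iff₀ hdd]
    linarith
  · obtain ⟨p, hp, hlt⟩ :=
      hunbdd (-d) hnegd_notMem (-(d.1 * x.1 + d.2 * x.2) - t * (d.1 ^ 2 + d.2 ^ 2))
    refine ⟨σ p, ?_, (hσ p hp).symm ▸ hp⟩
    simp only [Prod.fst_neg, Prod.snd_neg] at hlt
    rw [div_le_iff₀ hdd]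
    linarith

theorem interior_barrierCone_nonempty {S : Set (ℝ × ℝ)} (hS : Convex ℝ S)
    (hline : ∀ p d : ℝ × ℝ, d ≠ 0 → ¬ ∀ s : ℝ, p + s • d ∈ S) :
    (interior (barrierCone S)).Nonempty := by
  by_contra hempty
  rw [not_nonempty_iff_eq_empty] at hempty
  obtain ⟨φ, hφ0, hφ⟩ := (convex_barrierCone S).exists_linearMap_ne_zero_of_interior_eq_empty
    ⟨0, zero_mem_barrierCone S⟩ hempty
  set d : ℝ × ℝ := (φ (1, 0), φ (0, 1))
  have hd0 : d ≠ 0 := LinearMap.apply_prod_ne_zero hφ0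
  have hd : ∀ w ∈ barrierCone S, w.1 * d.1 + w.2 * d.2 = 0 := fun w hw => by
    have := hφ w hw 0 (zero_mem_barrierCone S)
    rw [map_zero, LinearMap.apply_eq_fst_add_snd] at this
    linarith
  have hSne : S.Nonempty := by
    rw [nonempty_iff_ne_empty]
    rintro rfl
    simp at hempty
  rcases (interior S).eq_empty_or_nonempty with hint | ⟨z, hz⟩
  · obtain ⟨x, hx⟩ := exists_forall_add_smul_mem_of_interior_eq_empty hS hSne hint hd0 hd
    exact hline x d hd0 hx
  · have hclosure : ∀ t : ℝ, z + t • d ∈ closure S :=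
      add_smul_mem_closure_of_forall_mem_barrierCone hS hd (subset_closure (interior_subset hz))
    exact hline z d hd0 fun t =>
      interior_subset (hS.add_smul_mem_interior_of_forall_mem_closure hz hclosure t)

theorem exists_int_ne_zero_mem_of_interior_nonempty {T : Set (ℝ × ℝ)}
    (hT : ∀ r : ℝ, 0 < r → ∀ c ∈ T, r • c ∈ T) (h : (interior T).Nonempty) :
    ∃ m n : ℤ, (m, n) ≠ (0, 0) ∧ ((m : ℝ), (n : ℝ)) ∈ T := by
  have hdense : Dense ((range fun q : ℚ × ℚ => ((q.1 : ℝ), (q.2 : ℝ))) \ {0}) :=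
    (Rat.denseRange_cast.prodMap Rat.denseRange_cast).sdiff_singleton 0
  obtain ⟨_, ⟨⟨⟨a, b⟩, rfl⟩, hne⟩, hint⟩ := hdense.exists_mem_open isOpen_interior h
  refine ⟨a.num * b.den, b.num * a.den, ?_, ?_⟩
  · contrapose! hne
    simp only [Prod.mk.injEq, mul_eq_zero, Int.natCast_eq_zero, Rat.den_ne_zero, or_false,
      Rat.num_eq_zero] at hne
    simp [hne.1, hne.2]
  · have hpos : (0 : ℝ) < a.den * b.den := by positivity
    convert hT _ hpos _ (interior_subset hint) using 1
    ext <;> simp only [Prod.smul_mk, smul_eq_mul] <;> push_cast <;>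
      rw [Rat.cast_def] <;> field_simp

theorem LinearIndependent.exists_smul_add_smul_eq {u v : ℝ × ℝ}
    (huv : LinearIndependent ℝ ![u, v]) (w : ℝ × ℝ) : ∃ a b : ℝ, a • u + b • v = w := by
  have hspan := huv.span_eq_top_of_card_eq_finrank' (by simp)
  rw [Matrix.range_cons, Matrix.range_cons, Matrix.range_empty, union_empty, ← insert_eq] at hspan
  exact Submodule.mem_span_pair.1 (hspan ▸ Submodule.mem_top)

/-- If `Ω ⊂ ℝ²` is a convex set containing no affine line, then for any lattice
`Λ` (spanned over `ℤ` by a basis `u, v` of `ℝ²`) there exists a nonzero `λ ∈ Λ`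
whose coefficient `c_λ = sup_{p∈Ω} (−λ·p)` is finite, i.e. the set
`{−λ·p : p ∈ Ω}` is bounded above. -/
theorem strongly_admissible_implies_admissible
    (Ω : Set (ℝ × ℝ)) (hconv : Convex ℝ Ω)
    (hline : ∀ p d : ℝ × ℝ, d ≠ 0 → ¬ ∀ s : ℝ, p + s • d ∈ Ω)
    (u v : ℝ × ℝ) (huv : LinearIndependent ℝ ![u, v]) :
    ∃ m n : ℤ, (m, n) ≠ (0, 0) ∧
      BddAbove {c : ℝ | ∃ p ∈ Ω,
        c = -(((m : ℝ) • u + (n : ℝ) • v).1 * p.1 + ((m : ℝ) • u + (n : ℝ) • v).2 * p.2)} := by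
  let L : ℝ × ℝ → ℝ × ℝ := fun c => -(c.1 • u + c.2 • v)
  have hT : (interior (L ⁻¹' barrierCone Ω)).Nonempty := by
    obtain ⟨w, hw⟩ := interior_barrierCone_nonempty hconv hline
    obtain ⟨a, b, hab⟩ := huv.exists_smul_add_smul_eq (-w)
    refine ⟨(a, b), preimage_interior_subset_interior_preimage (by fun_prop) ?_⟩
    simpa only [mem_preimage, L, hab, neg_neg] using hw
  have hcone : ∀ r : ℝ, 0 < r → ∀ c ∈ L ⁻¹' barrierCone Ω, r • c ∈ L ⁻¹' barrierCone Ω := by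
    intro r hr c hc
    have hL : L (r • c) = r • L c := by simp only [L, Prod.smul_fst, Prod.smul_snd]; module
    simpa [mem_preimage, hL] using smul_mem_barrierCone hr.le hc
  obtain ⟨m, n, hmn, M, hM⟩ := exists_int_ne_zero_mem_of_interior_nonempty hcone hT
  refine ⟨m, n, hmn, M, ?_⟩
  rintro _ ⟨p, hp, rfl⟩
  have := hM ⟨p, hp, rfl⟩
  simp only [L, Prod.fst_neg, Prod.snd_neg] at this
  linarith
end

section
/- The value (4/3)·∫₀^{π/6} √(cos t) dt lies strictly between 0.68 and 0.69. -/
/-! On `[k², 1]` the concave function `√x` lies between its chord through `(k², k)` and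
`(1, 1)` and its tangent at `1`, and both bounds are affine in `x`. With `x = cos t` they
integrate in closed form, and on `[0, π/6]` the choice `k = 9/10` already pins the value
`(4/3)·∫₀^{π/6} √(cos t) dt` between `0.6815…` and `π/9 + 1/3 = 0.6824…`. -/

open Real intervalIntegral Set

lemma sqrt_le_one_add_div_two {x : ℝ} (hx : 0 ≤ x) : √x ≤ (1 + x) / 2 := by
  nlinarith [sq_nonneg (√x - 1), sq_sqrt hx]

lemma add_div_one_add_le_sqrt {k x : ℝ} (hk : 0 ≤ k) (hkx : k ^ 2 ≤ x) (hx : x ≤ 1) :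
    (k + x) / (1 + k) ≤ √x := by
  have hk_le : k ≤ √x := le_sqrt_of_sq_le hkx
  have hle_one : √x ≤ 1 := sqrt_le_one.mpr hx
  rw [div_le_iff₀ (by linarith)]
  -- `(1 + k)√x - (k + x) = (√x - k)(1 - √x)`
  nlinarith [mul_nonneg (sub_nonneg.mpr hk_le) (sub_nonneg.mpr hle_one),
    sq_sqrt ((sq_nonneg k).trans hkx)]

lemma integral_const_add_cos_div (c d a : ℝ) :
    ∫ t in (0 : ℝ)..a, (c + cos t) / d = (c * a + sin a) / d := by
  rw [intervalIntegral.integral_div, integral_add intervalIntegrable_const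
    intervalIntegrable_cos, integral_const, integral_cos]
  simp [mul_comm]

theorem integral_sqrt_cos_mem_Icc {a k : ℝ} (ha : 0 ≤ a) (hk : 0 ≤ k)
    (hcos : ∀ t ∈ Icc 0 a, k ^ 2 ≤ cos t) :
    ∫ t in (0 : ℝ)..a, √(cos t) ∈ Icc ((k * a + sin a) / (1 + k)) ((a + sin a) / 2) := by
  have hint : ∀ c d : ℝ, IntervalIntegrable (fun t => (c + cos t) / d) MeasureTheory.volume 0 a :=
    fun c d => (continuous_const.add continuous_cos).div_const d |>.intervalIntegrable _ _
  have hsqrt : IntervalIntegrable (fun t => √(cos t)) MeasureTheory.volume 0 a :=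
    continuous_cos.sqrt.intervalIntegrable _ _
  have hupper := integral_const_add_cos_div 1 2 a
  rw [one_mul] at hupper
  rw [← integral_const_add_cos_div, ← hupper]
  exact ⟨integral_mono_on ha (hint _ _) hsqrt fun t ht =>
      add_div_one_add_le_sqrt hk (hcos t ht) (cos_le_one t),
    integral_mono_on ha hsqrt (hint _ _) fun t ht =>
      sqrt_le_one_add_div_two ((sq_nonneg k).trans (hcos t ht))⟩

lemma sq_nine_div_ten_le_cos {t : ℝ} (ht : t ∈ Icc 0 (π / 6)) : (9 / 10 : ℝ) ^ 2 ≤ cos t := by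
  have hcos : cos (π / 6) ≤ cos t :=
    cos_le_cos_of_nonneg_of_le_pi ht.1 (by linarith [pi_pos]) ht.2
  have hsqrt3 : (1.62 : ℝ) ≤ √3 := le_sqrt_of_sq_le (by norm_num)
  rw [cos_pi_div_six] at hcos
  linarith

/-- The value of the arithmetic-mean equi-affine distance function of the unit
disk at its center, `(4/3)·∫₀^{π/6} √(cos t) dt`, lies strictly between
`0.68` and `0.69`. -/
theorem disk_center_value_bounds :
    0.68 < (4 / 3) * ∫ t in (0 : ℝ)..(Real.pi / 6), Real.sqrt (Real.cos t) ∧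
    (4 / 3) * (∫ t in (0 : ℝ)..(Real.pi / 6), Real.sqrt (Real.cos t)) < 0.69 := by
  obtain ⟨hlower, hupper⟩ := integral_sqrt_cos_mem_Icc (by positivity) (by norm_num)
    fun _ => sq_nine_div_ten_le_cos
  rw [sin_pi_div_six] at hlower hupper
  norm_num at hlower hupper
  have := pi_gt_d2
  have := pi_lt_d2
  constructor <;> linarith
end
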